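/- For radii r_{m,n} = r0 · x^m · y^n on the hexagonal lattice (r0, x, y > 0), the circle packing angle-sum condition holds at every vertex: the six inner angles at vertex v_{m,n} in the six triangles of its flower sum to 2π. In particular, Doyle spirals are locally univalent circle packings of the hexagonal triangulation. -/
import Mathlib


open Real

/-- Inner angle at the vertex of radius `a` in the triangle with side lengths
`a+b, a+c, b+c` formed by three mutually externally tangent circles. -/
noncomputable def ang (a b c : ℝ) : ℝ :=
  Real.arccos (((a + b) ^ 2 + (a + c) ^ 2 - (b + c) ^ 2) / (2 * (a + b) * (a + c)))

namespace DoyleAux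

/-- The cosine of the inner angle. -/
noncomputable def q (a b c : ℝ) : ℝ :=
  ((a + b) ^ 2 + (a + c) ^ 2 - (b + c) ^ 2) / (2 * (a + b) * (a + c))

lemma ang_eq (a b c : ℝ) : ang a b c = Real.arccos (q a b c) := rfl

lemma q_lt_one {a b c : ℝ} (ha : 0 < a) (hb : 0 < b) (hc : 0 < c) : q a b c < 1 := by
  have hden : 0 < 2 * (a + b) * (a + c) := by positivity
  rw [q, div_lt_one hden]
  nlinarith [mul_pos hb hc]

lemma neg_one_lt_q {a b c : ℝ} (ha : 0 < a) (hb : 0 < b) (hc : 0 < c) : -1 < q a b c := by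
  have hden : 0 < 2 * (a + b) * (a + c) := by positivity
  rw [q, lt_div_iff₀ hden]
  nlinarith [mul_pos ha (add_pos (add_pos ha hb) hc)]

lemma arccos_le_arccos {s t : ℝ} (h : s ≤ t) : Real.arccos t ≤ Real.arccos s := by
  rw [Real.arccos_eq_pi_div_two_sub_arcsin, Real.arccos_eq_pi_div_two_sub_arcsin]
  have := Real.monotone_arcsin h
  linarith

lemma one_sub_q_sq {a b c : ℝ} (ha : 0 < a) (hb : 0 < b) (hc : 0 < c) :
    1 - q a b c ^ 2 =
      (2 * Real.sqrt (a * b * c * (a + b + c)) / ((a + b) * (a + c))) ^ 2 := by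
  have hs : Real.sqrt (a * b * c * (a + b + c)) ^ 2 = a * b * c * (a + b + c) :=
    Real.sq_sqrt (by positivity)
  have hE : (2 * Real.sqrt (a * b * c * (a + b + c)) / ((a + b) * (a + c))) ^ 2
      = 4 * (a * b * c * (a + b + c)) / ((a + b) * (a + c)) ^ 2 := by
    rw [div_pow, mul_pow]
    rw [Real.sq_sqrt (by positivity : (0:ℝ) ≤ a * b * c * (a + b + c))]
    norm_num
  rw [hE, q]
  have hab : (a + b) ≠ 0 := by positivity
  have hac : (a + c) ≠ 0 := by positivity
  field_simp
  ring

lemma sin_ang {a b c : ℝ} (ha : 0 < a) (hb : 0 < b) (hc : 0 < c) :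
    Real.sin (ang a b c) =
      2 * Real.sqrt (a * b * c * (a + b + c)) / ((a + b) * (a + c)) := by
  rw [ang_eq, Real.sin_arccos, one_sub_q_sq ha hb hc]
  exact Real.sqrt_sq (by positivity)

/-- Angle-sum identity for the triangle of three mutually tangent circles. -/
lemma ang_sum {a b c : ℝ} (ha : 0 < a) (hb : 0 < b) (hc : 0 < c) :
    ang a b c + ang b c a + ang c a b = Real.pi := by
  set α := ang a b c
  set β := ang b c a
  set γ := ang c a b
  have hA1 : -1 < q a b c := neg_one_lt_q ha hb hc
  have hA2 : q a b c < 1 := q_lt_one ha hb hc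
  have hB1 : -1 < q b c a := neg_one_lt_q hb hc ha
  have hB2 : q b c a < 1 := q_lt_one hb hc ha
  have hC1 : -1 < q c a b := neg_one_lt_q hc ha hb
  have hC2 : q c a b < 1 := q_lt_one hc ha hb
  have hα0 : 0 ≤ α := Real.arccos_nonneg _
  have hβ0 : 0 ≤ β := Real.arccos_nonneg _
  have hγ0 : 0 ≤ γ := Real.arccos_nonneg _
  have hγπ : γ ≤ Real.pi := Real.arccos_le_pi _
  -- α + β ≤ π, since q a b c ≥ - q b c a
  have hqq : -(q b c a) ≤ q a b c := by
    have key : (0:ℝ) ≤ q a b c + q b c a := by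
      rw [q, q, div_add_div _ _ (by positivity) (by positivity)]
      apply div_nonneg _ (by positivity)
      nlinarith [mul_pos (mul_pos (mul_pos ha hb) (add_pos ha hb))
        (show (0:ℝ) < a + b + 2 * c by linarith)]
    linarith
  have hαβ : α + β ≤ Real.pi := by
    have h1 : α ≤ Real.arccos (-(q b c a)) := arccos_le_arccos hqq
    rw [Real.arccos_neg] at h1
    have : Real.arccos (q b c a) = β := rfl
    linarith
  -- cos (α + β) = cos (π - γ)
  have hcos : Real.cos (α + β) = Real.cos (Real.pi - γ) := by
    rw [Real.cos_pi_sub]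
    have hγ : Real.cos γ = q c a b := Real.cos_arccos hC1.le hC2.le
    rw [Real.cos_add]
    have hcα : Real.cos α = q a b c := Real.cos_arccos hA1.le hA2.le
    have hcβ : Real.cos β = q b c a := Real.cos_arccos hB1.le hB2.le
    have hsα := sin_ang ha hb hc
    have hsβ := sin_ang hb hc ha
    rw [hcα, hcβ, hγ, hsα, hsβ]
    have hss : Real.sqrt (a * b * c * (a + b + c)) * Real.sqrt (b * c * a * (b + c + a)) =
        a * b * c * (a + b + c) := by
      rw [show b * c * a * (b + c + a) = a * b * c * (a + b + c) from by ring]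
      exact Real.mul_self_sqrt (by positivity)
    have hprod : 2 * Real.sqrt (a * b * c * (a + b + c)) / ((a + b) * (a + c)) *
        (2 * Real.sqrt (b * c * a * (b + c + a)) / ((b + c) * (b + a))) =
        4 * (a * b * c * (a + b + c)) / ((a + b) * (a + c) * ((b + c) * (b + a))) := by
      rw [div_mul_div_comm]
      congr 1
      rw [show 2 * Real.sqrt (a * b * c * (a + b + c)) * (2 * Real.sqrt (b * c * a * (b + c + a)))
          = 4 * (Real.sqrt (a * b * c * (a + b + c)) * Real.sqrt (b * c * a * (b + c + a)))
          from by ring, hss]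
    rw [q, q, q, hprod]
    have hab : (a + b) ≠ 0 := by positivity
    have hac : (a + c) ≠ 0 := by positivity
    have hbc : (b + c) ≠ 0 := by positivity
    field_simp
    ring
  -- conclude
  have h1 : α + β ∈ Set.Icc 0 Real.pi := ⟨by linarith, hαβ⟩
  have h2 : Real.pi - γ ∈ Set.Icc 0 Real.pi := ⟨by linarith, by linarith⟩
  have := Real.injOn_cos h1 h2 hcos
  linarith

/-- Scale invariance of the inner angle. -/
lemma ang_smul {k a b c : ℝ} (hk : 0 < k) (ha : 0 < a) (hb : 0 < b) (hc : 0 < c) :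
    ang (k * a) (k * b) (k * c) = ang a b c := by
  unfold ang
  congr 1
  have h1 : a + b ≠ 0 := by positivity
  have h2 : a + c ≠ 0 := by positivity
  have h3 : k ≠ 0 := ne_of_gt hk
  field_simp

end DoyleAux

/-- For the Doyle-spiral radii `r_{m,n} = r0 · x^m · y^n` on the hexagonal lattice,
the six inner angles at each vertex sum to `2π`: Doyle spirals are locally univalent
circle packings of the hexagonal triangulation. -/
theorem stmt_9 (r0 x y : ℝ) (hr0 : 0 < r0) (hx : 0 < x) (hy : 0 < y)
    (r : ℤ → ℤ → ℝ) (hr : ∀ m n : ℤ, r m n = r0 * x ^ m * y ^ n) (m n : ℤ) :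
    ang (r m n) (r (m + 1) n) (r m (n + 1)) +
    ang (r m n) (r m (n + 1)) (r (m - 1) (n + 1)) +
    ang (r m n) (r (m - 1) (n + 1)) (r (m - 1) n) +
    ang (r m n) (r (m - 1) n) (r m (n - 1)) +
    ang (r m n) (r m (n - 1)) (r (m + 1) (n - 1)) +
    ang (r m n) (r (m + 1) (n - 1)) (r (m + 1) n) = 2 * Real.pi := by
  have hx' : x ≠ 0 := ne_of_gt hx
  have hy' : y ≠ 0 := ne_of_gt hy
  set A : ℝ := r0 * x ^ m * y ^ n with hA
  have hApos : 0 < A := by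
    have : (0:ℝ) < x ^ m := zpow_pos hx m
    have : (0:ℝ) < y ^ n := zpow_pos hy n
    positivity
  have e00 : r m n = A := hr m n
  have e10 : r (m + 1) n = A * x := by
    rw [hr, hA, zpow_add_one₀ hx']; ring
  have e01 : r m (n + 1) = A * y := by
    rw [hr, hA, zpow_add_one₀ hy']; ring
  have em10 : r (m - 1) n = A * x⁻¹ := by
    rw [hr, hA, zpow_sub_one₀ hx']; ring
  have e0m1 : r m (n - 1) = A * y⁻¹ := by
    rw [hr, hA, zpow_sub_one₀ hy']; ring
  have em11 : r (m - 1) (n + 1) = A * (y * x⁻¹) := by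
    rw [hr, hA, zpow_sub_one₀ hx', zpow_add_one₀ hy']; ring
  have e1m1 : r (m + 1) (n - 1) = A * (x * y⁻¹) := by
    rw [hr, hA, zpow_add_one₀ hx', zpow_sub_one₀ hy']; ring
  rw [e00, e10, e01, em10, e0m1, em11, e1m1]
  have hxi : 0 < x⁻¹ := inv_pos.2 hx
  have hyi : 0 < y⁻¹ := inv_pos.2 hy
  -- Triangle 1: radii A, A*x, A*y  (terms 1, 3, 5)
  -- term 3 : ang A (A*(y*x⁻¹)) (A*x⁻¹) = ang (A*x) (A*y) A   (scale by x)
  have t3 : ang A (A * (y * x⁻¹)) (A * x⁻¹) = ang (A * x) (A * y) A := by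
    have := DoyleAux.ang_smul (k := x) (a := A) (b := A * (y * x⁻¹)) (c := A * x⁻¹)
      hx hApos (by positivity) (by positivity)
    rw [← this]
    have h1 : x * (A * (y * x⁻¹)) = A * y := by field_simp; try ring
    have h2 : x * (A * x⁻¹) = A := by field_simp; try ring
    rw [h1, h2, mul_comm x A]
  -- term 5 : ang A (A*y⁻¹) (A*(x*y⁻¹)) = ang (A*y) A (A*x)   (scale by y)
  have t5 : ang A (A * y⁻¹) (A * (x * y⁻¹)) = ang (A * y) A (A * x) := by
    have := DoyleAux.ang_smul (k := y) (a := A) (b := A * y⁻¹) (c := A * (x * y⁻¹))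
      hy hApos (by positivity) (by positivity)
    rw [← this]
    have h1 : y * (A * y⁻¹) = A := by field_simp; try ring
    have h2 : y * (A * (x * y⁻¹)) = A * x := by field_simp; try ring
    rw [h1, h2, mul_comm y A]
  -- Triangle 2: radii A, A*y, A*(y*x⁻¹)  (terms 2, 4, 6)
  -- term 4 : ang A (A*x⁻¹) (A*y⁻¹) = ang (A*y) (A*(y*x⁻¹)) A   (scale by y)
  have t4 : ang A (A * x⁻¹) (A * y⁻¹) = ang (A * y) (A * (y * x⁻¹)) A := by
    have := DoyleAux.ang_smul (k := y) (a := A) (b := A * x⁻¹) (c := A * y⁻¹)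
      hy hApos (by positivity) (by positivity)
    rw [← this]
    have h1 : y * (A * x⁻¹) = A * (y * x⁻¹) := by ring
    have h2 : y * (A * y⁻¹) = A := by field_simp; try ring
    rw [h1, h2, mul_comm y A]
  -- term 6 : ang A (A*(x*y⁻¹)) (A*x) = ang (A*(y*x⁻¹)) A (A*y)   (scale by y*x⁻¹)
  have t6 : ang A (A * (x * y⁻¹)) (A * x) = ang (A * (y * x⁻¹)) A (A * y) := by
    have := DoyleAux.ang_smul (k := y * x⁻¹) (a := A) (b := A * (x * y⁻¹)) (c := A * x)
      (by positivity) hApos (by positivity) (by positivity)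
    rw [← this]
    have h1 : y * x⁻¹ * (A * (x * y⁻¹)) = A := by field_simp; try ring
    have h2 : y * x⁻¹ * (A * x) = A * y := by field_simp; try ring
    rw [h1, h2, mul_comm (y * x⁻¹) A]
  rw [t3, t4, t5, t6]
  have T1 : ang A (A * x) (A * y) + ang (A * x) (A * y) A + ang (A * y) A (A * x) = Real.pi :=
    DoyleAux.ang_sum hApos (by positivity) (by positivity)
  have T2 : ang A (A * y) (A * (y * x⁻¹)) + ang (A * y) (A * (y * x⁻¹)) A +
      ang (A * (y * x⁻¹)) A (A * y) = Real.pi :=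
    DoyleAux.ang_sum hApos (by positivity) (by positivity)
  linarith
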